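/- arXiv:1604.02136 — 8 statements merged into one kernel-verified Lean document; each statement's English description precedes it below -/
import Mathlib

section
/- Let (A,+) be a cancellative monoid, X ⊆ A, and z an invertible element of A lying in the center of X (i.e., x + z = z + x for all x ∈ X). Then −z also lies in the center of X, and if the subsemigroup ⟨X⟩ generated by X is commutative, then so are ⟨X − z⟩ and ⟨−z + X⟩, where X − z := {x + (−z) : x ∈ X}. -/
open scoped Pointwise Classical
open AddSubsemigroup

namespace CD

variable {A : Type*} [AddSemigroup A]

/-- An element `z` is cancellable if both translation maps are injective. -/
def Cancellable (z : A) : Prop :=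
  Function.Injective (fun x : A => x + z) ∧ Function.Injective (fun x : A => z + x)

/-- `e` is a two-sided identity of the semigroup. -/
def IsIdentity (e : A) : Prop := ∀ x : A, x + e = x ∧ e + x = x

/-- `u` is a unit: there is a two-sided identity and a two-sided inverse of `u`. -/
def IsUnitElem (u : A) : Prop := ∃ e v : A, IsIdentity e ∧ u + v = e ∧ v + u = e

/-- The inverse of a unit (junk value otherwise). -/
noncomputable def neg (u : A) : A :=
  if h : IsUnitElem u then h.choose_spec.choose else u

/-- `ord a` is the cardinality of the subsemigroup generated by `a`. -/
noncomputable def ord (a : A) : ℕ∞ := (closure {a} : Set A).encard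

/-- The units of `A` lying in `W`. -/
def unitsIn (W : Set A) : Set A := {w ∈ W | IsUnitElem w}

/-- A set is commutative if its elements pairwise commute. -/
def CommOn (S : Set A) : Prop := ∀ a ∈ S, ∀ b ∈ S, a + b = b + a

/-- The Cauchy-Davenport constant of a set. -/
noncomputable def gamma (X : Set A) : ℕ∞ :=
  if X.encard ≤ 1 then X.encard
  else ⨆ x₀ ∈ unitsIn X, ⨅ x ∈ {x ∈ X | x ≠ x₀}, ord (x + neg x₀)

/-- The sumset `X 0 + X 1 + ⋯ + X n` of a tuple of sets. -/
def sumsetTup : (n : ℕ) → (Fin (n + 1) → Set A) → Set A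
  | 0, X => X 0
  | n + 1, X => sumsetTup n (fun i => X i.castSucc) + X (Fin.last (n + 1))

/-- The sum `x 0 + x 1 + ⋯ + x n` of a tuple of elements. -/
def sumTup : (n : ℕ) → (Fin (n + 1) → A) → A
  | 0, x => x 0
  | n + 1, x => sumTup n (fun i => x i.castSucc) + x (Fin.last (n + 1))

/-- `nfold n a` is the `(n+1)`-fold sum `a + a + ⋯ + a`. -/
def nfold : ℕ → A → A
  | 0, a => a
  | n + 1, a => nfold n a + a

/-- `⟨⟨W⟩⟩`, the subsemigroup generated by `W` together with the inverses of its units. -/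
noncomputable def dclosure (W : Set A) : Set A :=
  (closure (W ∪ neg '' unitsIn W) : Set A)

/-- `Ỹ_z = {y ∈ Y : z ∈ X + Y + y}`. -/
noncomputable def Ytil (X Y : Set A) (z : A) : Set A := {y ∈ Y | z ∈ X + Y + {y}}

/-- `z − W = {w : z ∈ w + W}`. -/
def subFrom (z : A) (W : Set A) : Set A := {w : A | ∃ u ∈ W, w + u = z}

end CD

open CD

namespace CD

section Semigroup

variable {A : Type*} [AddSemigroup A]

theorem CommOn.closure {S : Set A} (h : CommOn S) : CommOn (closure S : Set A) :=
  fun a ha b hb => Set.addCentralizer_addCentralizer_comm_of_comm h a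
    (closure_le_centralizer_centralizer S ha) b (closure_le_centralizer_centralizer S hb)

theorem commOn_closure_image_add_right {X : Set A} {w : A} (hX : CommOn (closure X : Set A))
    (hw : ∀ x ∈ X, AddCommute x w) : CommOn (closure ((· + w) '' X) : Set A) := by
  refine CommOn.closure ?_
  rintro _ ⟨x, hx, rfl⟩ _ ⟨y, hy, rfl⟩
  have hxy : AddCommute x y := hX x (subset_closure hx) y (subset_closure hy)
  exact (hxy.add_right (hw x hx)).add_left ((hw y hy).symm.add_right (.refl w))

theorem commOn_closure_image_add_left {X : Set A} {w : A} (hX : CommOn (closure X : Set A))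
    (hw : ∀ x ∈ X, AddCommute w x) : CommOn (closure ((w + ·) '' X) : Set A) := by
  refine CommOn.closure ?_
  rintro _ ⟨x, hx, rfl⟩ _ ⟨y, hy, rfl⟩
  have hxy : AddCommute x y := hX x (subset_closure hx) y (subset_closure hy)
  exact ((AddCommute.refl w).add_right (hw y hy)).add_left ((hw x hx).symm.add_right hxy)

end Semigroup

section Monoid

variable {A : Type*} [AddMonoid A]

theorem IsIdentity.eq_zero {e : A} (he : IsIdentity e) : e = 0 := by
  simpa using (he 0).1

theorem IsUnitElem.add_neg_and_neg_add {u : A} (hu : IsUnitElem u) :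
    u + neg u = 0 ∧ neg u + u = 0 := by
  rw [neg, dif_pos hu]
  obtain ⟨he, h₁, h₂⟩ := hu.choose_spec.choose_spec
  exact ⟨h₁.trans he.eq_zero, h₂.trans he.eq_zero⟩

noncomputable def IsUnitElem.toAddUnits {u : A} (hu : IsUnitElem u) : AddUnits A where
  val := u
  neg := neg u
  val_neg := hu.add_neg_and_neg_add.1
  neg_val := hu.add_neg_and_neg_add.2

theorem IsUnitElem.addCommute_neg {u x : A} (hu : IsUnitElem u) (h : AddCommute x u) :
    AddCommute x (neg u) :=
  AddCommute.addUnits_neg_right (u := hu.toAddUnits) h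

end Monoid

end CD

theorem stmt3_general {A : Type*} [AddMonoid A] (X : Set A) (z : A)
    (hz : IsUnitElem z) (hc : ∀ x ∈ X, x + z = z + x) :
    (∀ x ∈ X, x + neg z = neg z + x) ∧
    (CommOn (AddSubsemigroup.closure X : Set A) →
      CommOn (AddSubsemigroup.closure ((fun x => x + neg z) '' X) : Set A) ∧
      CommOn (AddSubsemigroup.closure ((fun x => neg z + x) '' X) : Set A)) := by
  have hneg : ∀ x ∈ X, AddCommute x (neg z) := fun x hx => hz.addCommute_neg (hc x hx)
  exact ⟨hneg, fun hX => ⟨commOn_closure_image_add_right hX hneg,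
    commOn_closure_image_add_left hX fun x hx => (hneg x hx).symm⟩⟩

theorem stmt3 {A : Type*} [AddMonoid A] [IsCancelAdd A] (X : Set A) (z : A)
    (hz : IsUnitElem z) (hc : ∀ x ∈ X, x + z = z + x) :
    (∀ x ∈ X, x + neg z = neg z + x) ∧
    (CommOn (AddSubsemigroup.closure X : Set A) →
      CommOn (AddSubsemigroup.closure ((fun x => x + neg z) '' X) : Set A) ∧
      CommOn (AddSubsemigroup.closure ((fun x => neg z + x) '' X) : Set A)) :=
  stmt3_general X z hz hc
end

section
/- Let (A,+) be a cancellative semigroup and X, Y ⊆ A with X + 2Y ⊄ X + Y and ⟨Y⟩ commutative. Fix z ∈ (X + 2Y) \ (X + Y), and set Ỹ_z := {y ∈ Y : z ∈ X + Y + y} and Y_z := Y \ Ỹ_z. Then (X + Y_z) ∪ (z − Ỹ_z) ⊆ X + Y, where z − Ỹ_z := {w ∈ A : z ∈ w + Ỹ_z}. -/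
open scoped Pointwise Classical
open AddSubsemigroup

open CD

theorem stmt7 {A : Type*} [AddSemigroup A] [IsCancelAdd A] (X Y : Set A)
    (h1 : ¬ X + (Y + Y) ⊆ X + Y)
    (hcomm : CommOn (AddSubsemigroup.closure Y : Set A))
    (z : A) (hz : z ∈ (X + (Y + Y)) \ (X + Y)) :
    (X + (Y \ Ytil X Y z)) ∪ subFrom z (Ytil X Y z) ⊆ X + Y := by
  rintro w (hw | hw)
  · exact Set.add_subset_add_left (Set.diff_subset) hw
  · obtain ⟨u, hu, hwu⟩ := hw
    obtain ⟨-, hs⟩ := hu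
    obtain ⟨s, hs', y, hy, rfl⟩ := hs
    simp only [Set.mem_singleton_iff] at hy
    subst hy
    have : w = s := add_right_cancel hwu
    exact this ▸ hs'
end

section
/- Let (A,+) be a cancellative semigroup and X, Y ⊆ A with X + 2Y ⊄ X + Y and ⟨Y⟩ commutative. Fix z ∈ (X + 2Y) \ (X + Y), and set Ỹ_z := {y ∈ Y : z ∈ X + Y + y} and Y_z := Y \ Ỹ_z. Then (X + Y_z) ∩ (z − Ỹ_z) = ∅. -/
open scoped Pointwise Classical
open AddSubsemigroup

open CD

theorem stmt8 {A : Type*} [AddSemigroup A] [IsCancelAdd A] (X Y : Set A)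
    (h1 : ¬ X + (Y + Y) ⊆ X + Y)
    (hcomm : CommOn (AddSubsemigroup.closure Y : Set A))
    (z : A) (hz : z ∈ (X + (Y + Y)) \ (X + Y)) :
    (X + (Y \ Ytil X Y z)) ∩ subFrom z (Ytil X Y z) = ∅ := by
  ext t
  simp only [Set.mem_inter_iff, Set.mem_empty_iff_false, iff_false]
  rintro ⟨⟨x, hx, y, hy, rfl⟩, u, hu, hzu⟩
  obtain ⟨hyY, hynot⟩ := hy
  obtain ⟨huY, -⟩ := hu
  apply hynot
  refine ⟨hyY, ?_⟩
  have hc : y + u = u + y :=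
    hcomm y (AddSubsemigroup.subset_closure hyY) u (AddSubsemigroup.subset_closure huY)
  exact ⟨x + u, ⟨x, hx, u, huY, rfl⟩, y, rfl, by
    show x + u + y = z; rw [add_assoc, ← hc, ← add_assoc]; exact hzu⟩
end

section
/- Let (A,+) be a cancellative semigroup and X, Y ⊆ A with X + 2Y ⊄ X + Y and ⟨Y⟩ commutative. Fix z ∈ (X + 2Y) \ (X + Y), and set Ỹ_z := {y ∈ Y : z ∈ X + Y + y}. Then |z − Ỹ_z| ≥ |Ỹ_z|, where z − Ỹ_z := {w ∈ A : z ∈ w + Ỹ_z}. -/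
open scoped Pointwise Classical
open AddSubsemigroup

open CD

theorem stmt9 {A : Type*} [AddSemigroup A] [IsCancelAdd A] (X Y : Set A)
    (h1 : ¬ X + (Y + Y) ⊆ X + Y)
    (hcomm : CommOn (AddSubsemigroup.closure Y : Set A))
    (z : A) (hz : z ∈ (X + (Y + Y)) \ (X + Y)) :
    (Ytil X Y z).encard ≤ (subFrom z (Ytil X Y z)).encard := by
  have hex : ∀ y ∈ Ytil X Y z, ∃ w : A, w + y = z := by
    intro y hy
    obtain ⟨-, hmem⟩ := hy
    obtain ⟨a, ha, b, hb, hab⟩ := hmem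
    rcases hb with rfl
    exact ⟨a, hab⟩
  choose f hf using hex
  apply Set.encard_le_encard_of_injOn (f := fun y => if h : y ∈ Ytil X Y z then f y h else y)
  · intro y hy
    simp only [dif_pos hy]
    exact ⟨y, hy, hf y hy⟩
  · intro y₁ h₁ y₂ h₂ heq
    simp only [dif_pos h₁, dif_pos h₂] at heq
    have := (hf y₁ h₁).trans (hf y₂ h₂).symm
    rw [heq] at this
    exact add_left_cancel this
end

section
/- Let (A,+) be a cancellative semigroup and X, Y ⊆ A with X + 2Y ⊄ X + Y and ⟨Y⟩ commutative. Fix z ∈ (X + 2Y) \ (X + Y), and set Ỹ_z := {y ∈ Y : z ∈ X + Y + y} and Y_z := Y \ Ỹ_z. Then |X + Y| + |Y_z| ≥ |X + Y_z| + |Y| (Davenport transform inequality). -/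
/-!
Each `y ∈ Ỹ_z` comes with some `w ∈ X + Y` such that `w + y = z`, and by cancellation distinct
`y` give distinct `w`. No such `w` lies in `X + Y_z`: from `w = x + y'` with `y' ∈ Y_z`,
commutativity gives `z = (x + y) + y' ∈ X + Y + y'`, i.e. `y' ∈ Ỹ_z`. Hence
`|Ỹ_z| ≤ |(X + Y) \ (X + Y_z)|`, which rearranges to the inequality.
-/

open scoped Pointwise Classical
open AddSubsemigroup

open CD

namespace Set

variable {α : Type*}

theorem encard_add_encard_le_add_of_encard_sdiff_le {S S' T T' : Set α} (hS : S' ⊆ S)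
    (hT : T' ⊆ T) (h : (T \ T').encard ≤ (S \ S').encard) :
    S'.encard + T.encard ≤ S.encard + T'.encard := by
  rw [← encard_sdiff_add_encard_of_subset hS, ← encard_sdiff_add_encard_of_subset hT]
  calc S'.encard + ((T \ T').encard + T'.encard)
      ≤ S'.encard + ((S \ S').encard + T'.encard) := by gcongr
    _ = (S \ S').encard + S'.encard + T'.encard := by ring

end Set

namespace CD

variable {A : Type*} [AddSemigroup A]

theorem CommOn.mono {S T : Set A} (hT : CommOn T) (hST : S ⊆ T) : CommOn S :=
  fun a ha b hb => hT a (hST ha) b (hST hb)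

theorem Ytil_subset (X Y : Set A) (z : A) : Ytil X Y z ⊆ Y := fun _ hy => hy.1

theorem exists_add_eq_of_mem_Ytil {X Y : Set A} {z y : A} (hy : y ∈ Ytil X Y z) :
    ∃ w ∈ X + Y, w + y = z := by
  simpa [Set.add_singleton] using hy.2

theorem not_mem_add_sdiff_Ytil {X Y : Set A} (hY : CommOn Y) {z y w : A} (hy : y ∈ Y)
    (hwy : w + y = z) : w ∉ X + (Y \ Ytil X Y z) := by
  rintro ⟨x, hx, y', ⟨hy', hy'_not⟩, rfl⟩
  refine hy'_not ⟨hy', x + y, Set.add_mem_add hx hy, y', rfl, ?_⟩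
  rw [← hwy]
  show x + y + y' = x + y' + y
  rw [add_assoc, hY y hy y' hy', add_assoc]

theorem encard_Ytil_le [IsLeftCancelAdd A] {X Y : Set A} (hY : CommOn Y) (z : A) :
    (Ytil X Y z).encard ≤ ((X + Y) \ (X + (Y \ Ytil X Y z))).encard := by
  choose! f hf_mem hf_add using fun y (hy : y ∈ Ytil X Y z) => exists_add_eq_of_mem_Ytil hy
  refine Set.encard_le_encard_of_injOn (f := f) (fun y hy => ⟨hf_mem y hy, ?_⟩) ?_
  · exact not_mem_add_sdiff_Ytil hY (Ytil_subset X Y z hy) (hf_add y hy)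
  · intro y₁ hy₁ y₂ hy₂ hf
    exact add_left_cancel ((hf ▸ hf_add y₁ hy₁).trans (hf_add y₂ hy₂).symm)

end CD

theorem stmt10_general {A : Type*} [AddSemigroup A] [IsCancelAdd A] (X Y : Set A)
    (hcomm : CommOn (AddSubsemigroup.closure Y : Set A))
    (z : A) :
    (X + (Y \ Ytil X Y z)).encard + Y.encard ≤ (X + Y).encard + (Y \ Ytil X Y z).encard := by
  refine Set.encard_add_encard_le_add_of_encard_sdiff_le
    (Set.add_subset_add_left Set.sdiff_subset) Set.sdiff_subset ?_
  rw [Set.sdiff_sdiff_cancel_left (Ytil_subset X Y z)]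
  exact encard_Ytil_le (hcomm.mono AddSubsemigroup.subset_closure) z

theorem stmt10 {A : Type*} [AddSemigroup A] [IsCancelAdd A] (X Y : Set A)
    (h1 : ¬ X + (Y + Y) ⊆ X + Y)
    (hcomm : CommOn (AddSubsemigroup.closure Y : Set A))
    (z : A) (hz : z ∈ (X + (Y + Y)) \ (X + Y)) :
    (X + (Y \ Ytil X Y z)).encard + Y.encard ≤ (X + Y).encard + (Y \ Ytil X Y z).encard :=
  stmt10_general X Y hcomm z
end

section
/- Let (A,+) be a cancellative semigroup and X, Y ⊆ A finite sets such that ⟨Y⟩ is commutative and Y contains a unit. Then the following are equivalent: (i) X + 2Y = X + Y + ȳ for some unit ȳ ∈ Y; (ii) X + 2Y = X + Y + y for every y ∈ Y; (iii) for every unit ȳ ∈ Y, X + ⟨⟨Y − ȳ⟩⟩ = X + ⟨Y − ȳ⟩ = X + Y − ȳ. -/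
open scoped Pointwise Classical
open AddSubsemigroup

open CD

section AuxLemmas

variable {A : Type*} [AddSemigroup A]

lemma aux_neg_spec {u : A} (h : IsUnitElem u) :
    ∃ e : A, IsIdentity e ∧ u + neg u = e ∧ neg u + u = e := by
  rw [neg, dif_pos h]
  exact ⟨h.choose, h.choose_spec.choose_spec⟩

lemma aux_add_singleton_id {e : A} (he : IsIdentity e) (S : Set A) : S + {e} = S := by
  ext x
  simp only [Set.add_singleton, Set.mem_image]
  constructor
  · rintro ⟨a, ha, rfl⟩; rwa [(he a).1]
  · intro hx; exact ⟨x, hx, (he x).1⟩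

lemma aux_add_sing_sing (T : Set A) (a b : A) : T + {a} + {b} = T + {a + b} := by
  rw [add_assoc, Set.singleton_add_singleton]

lemma aux_neg_comm {Y : Set A}
    (hcomm : CommOn (AddSubsemigroup.closure Y : Set A)) {u e : A} (hu : u ∈ Y)
    (he : IsIdentity e) (huv : u + neg u = e) (hvu : neg u + u = e)
    {a : A} (ha : a ∈ (AddSubsemigroup.closure Y : Set A)) :
    neg u + a = a + neg u := by
  have hau : a + u = u + a := hcomm a ha u (AddSubsemigroup.subset_closure hu)
  calc neg u + a = neg u + (a + e) := by rw [(he a).1]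
    _ = neg u + (a + (u + neg u)) := by rw [huv]
    _ = neg u + ((a + u) + neg u) := by rw [add_assoc a u]
    _ = neg u + ((u + a) + neg u) := by rw [hau]
    _ = (neg u + u) + (a + neg u) := by rw [add_assoc u a, ← add_assoc]
    _ = e + (a + neg u) := by rw [hvu]
    _ = a + neg u := (he _).2

end AuxLemmas

theorem stmt11' {A : Type*} [AddSemigroup A] [IsCancelAdd A] (X Y : Set A)
    (hX : X.Finite) (hY : Y.Finite)
    (hcomm : CommOn (AddSubsemigroup.closure Y : Set A))
    (hu : ∃ y ∈ Y, IsUnitElem y) :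
    ((∃ ybar ∈ Y, IsUnitElem ybar ∧ X + (Y + Y) = X + Y + {ybar}) ↔
      (∀ y ∈ Y, X + (Y + Y) = X + Y + {y})) ∧
    ((∀ y ∈ Y, X + (Y + Y) = X + Y + {y}) ↔
      (∀ ybar ∈ Y, IsUnitElem ybar →
        X + dclosure ((fun y => y + neg ybar) '' Y) =
          X + (AddSubsemigroup.closure ((fun y => y + neg ybar) '' Y) : Set A) ∧
        X + (AddSubsemigroup.closure ((fun y => y + neg ybar) '' Y) : Set A) =
          X + ((fun y => y + neg ybar) '' Y))) := by
  have inj : ∀ b : A, Function.Injective (fun x : A => x + b) :=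
    fun b p q h => add_right_cancel h
  have sub_gen : ∀ y ∈ Y, X + Y + {y} ⊆ X + (Y + Y) := by
    intro y hy
    rw [add_assoc]
    exact Set.add_subset_add_left (Set.add_subset_add_left (Set.singleton_subset_iff.2 hy))
  have hfin : (X + (Y + Y)).Finite := hX.add (hY.add hY)
  have ncard_eq : ∀ y : A, (X + Y + {y}).ncard = (X + Y).ncard := by
    intro y; rw [Set.add_singleton]; exact Set.ncard_image_of_injective _ (inj y)
  have i_to_ii : (∃ b ∈ Y, X + (Y + Y) = X + Y + {b}) →
      ∀ y ∈ Y, X + (Y + Y) = X + Y + {y} := by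
    rintro ⟨b, hb, heq⟩ y hy
    refine (Set.eq_of_subset_of_ncard_le (sub_gen y hy) ?_ hfin).symm
    rw [heq, ncard_eq, ncard_eq]
  constructor
  · constructor
    · rintro ⟨b, hb, _, heq⟩
      exact i_to_ii ⟨b, hb, heq⟩
    · intro h
      obtain ⟨y0, hy0, hy0u⟩ := hu
      exact ⟨y0, hy0, hy0u, h y0 hy0⟩
  · constructor
    · -- (ii) → (iii)
      intro hii ybar hybarY hybaru
      obtain ⟨e, he, huv, hvu⟩ := aux_neg_spec hybaru
      set v := neg ybar with hvdef
      have himg : ((fun y => y + v) '' Y) = Y + {v} := Set.add_singleton.symm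
      rw [himg]
      have vcomm : ∀ y ∈ Y, v + y = y + v := fun y hy =>
        aux_neg_comm hcomm hybarY he huv hvu (AddSubsemigroup.subset_closure hy)
      have key : ∀ y ∈ Y, X + Y + {y} = X + Y + {ybar} :=
        fun y hy => (hii y hy).symm.trans (hii ybar hybarY)
      have heY' : e ∈ Y + {v} := ⟨ybar, hybarY, v, rfl, huv⟩
      have L1 : ∀ y' ∈ Y + {v}, X + (Y + {v}) + {y'} = X + (Y + {v}) := by
        intro y' hy'
        obtain ⟨y, hy, rfl⟩ : ∃ y ∈ Y, y + v = y' := by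
          simpa [Set.add_singleton] using hy'
        have e1 : v + (y + v) = y + (v + v) := by
          rw [← add_assoc, vcomm y hy, add_assoc]
        have e2 : ybar + (v + v) = v := by
          rw [← add_assoc, huv, (he v).2]
        calc X + (Y + {v}) + {y + v}
            = X + Y + {v} + {y + v} := by rw [add_assoc X Y]
          _ = X + Y + {v + (y + v)} := aux_add_sing_sing _ _ _
          _ = X + Y + {y + (v + v)} := by rw [e1]
          _ = X + Y + {y} + {v + v} := (aux_add_sing_sing _ _ _).symm
          _ = X + Y + {ybar} + {v + v} := by rw [key y hy]
          _ = X + Y + {ybar + (v + v)} := aux_add_sing_sing _ _ _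
          _ = X + Y + {v} := by rw [e2]
          _ = X + (Y + {v}) := add_assoc X Y _
      have L2 : ∀ u, u ∈ Y + {v} → IsUnitElem u →
          X + (Y + {v}) + {neg u} = X + (Y + {v}) := by
        intro u huY' huu
        obtain ⟨eu, heu, huvu, hvuu⟩ := aux_neg_spec huu
        calc X + (Y + {v}) + {neg u}
            = X + (Y + {v}) + {u} + {neg u} := by rw [L1 u huY']
          _ = X + (Y + {v}) + {u + neg u} := aux_add_sing_sing _ _ _
          _ = X + (Y + {v}) + {eu} := by rw [huvu]
          _ = X + (Y + {v}) := aux_add_singleton_id heu _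
      have L3 : ∀ w ∈ (AddSubsemigroup.closure
            ((Y + {v}) ∪ neg '' unitsIn (Y + {v})) : Set A),
          X + (Y + {v}) + {w} = X + (Y + {v}) := by
        intro w hw
        refine AddSubsemigroup.closure_induction
          (p := fun w _ => X + (Y + {v}) + {w} = X + (Y + {v})) ?_ ?_ hw
        · rintro w (hw0 | ⟨u, hu0, rfl⟩)
          · exact L1 w hw0
          · exact L2 u hu0.1 hu0.2
        · intro a b _ _ ha hb
          rw [← aux_add_sing_sing, ha, hb]
      have main : X + (AddSubsemigroup.closure
            ((Y + {v}) ∪ neg '' unitsIn (Y + {v})) : Set A) ⊆ X + (Y + {v}) := by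
        intro z hz
        rw [Set.mem_add] at hz
        obtain ⟨x, hx, w, hw, rfl⟩ := hz
        have hxw : x + w ∈ X + (Y + {v}) + {w} := by
          rw [Set.mem_add]
          exact ⟨x + e, ⟨x, hx, e, heY', rfl⟩, w, rfl, by rw [(he x).1]⟩
        rwa [L3 w hw] at hxw
      have hsub1 : (Y + {v} : Set A) ⊆ (AddSubsemigroup.closure (Y + {v}) : Set A) :=
        AddSubsemigroup.subset_closure
      have hsub2 : (AddSubsemigroup.closure (Y + {v}) : Set A) ⊆
          (AddSubsemigroup.closure ((Y + {v}) ∪ neg '' unitsIn (Y + {v})) : Set A) :=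
        AddSubsemigroup.closure_mono Set.subset_union_left
      unfold dclosure
      constructor
      · apply Set.Subset.antisymm
        · exact fun z hz => Set.add_subset_add_left hsub1 (main hz)
        · exact Set.add_subset_add_left hsub2
      · apply Set.Subset.antisymm
        · exact fun z hz => main (Set.add_subset_add_left hsub2 hz)
        · exact Set.add_subset_add_left hsub1
    · -- (iii) → (ii)
      intro hiii
      apply i_to_ii
      obtain ⟨ybar, hybarY, hybaru⟩ := hu
      obtain ⟨e, he, huv, hvu⟩ := aux_neg_spec hybaru
      set v := neg ybar with hvdef
      have himg : ((fun y => y + v) '' Y) = Y + {v} := Set.add_singleton.symm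
      have h3 := (hiii ybar hybarY hybaru).2
      rw [himg] at h3
      have vcomm : ∀ y ∈ Y, v + y = y + v := fun y hy =>
        aux_neg_comm hcomm hybarY he huv hvu (AddSubsemigroup.subset_closure hy)
      have hswap : ({v} : Set A) + Y = Y + {v} := by
        ext z
        simp only [Set.singleton_add, Set.add_singleton, Set.mem_image]
        constructor
        · rintro ⟨y, hy, rfl⟩; exact ⟨y, hy, (vcomm y hy).symm⟩
        · rintro ⟨y, hy, rfl⟩; exact ⟨y, hy, vcomm y hy⟩
      have compute : (Y + {v}) + (Y + {v}) = (Y + Y) + {v + v} := by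
        calc (Y + {v}) + (Y + {v}) = Y + ({v} + (Y + {v})) := add_assoc _ _ _
          _ = Y + (({v} + Y) + {v}) := by rw [add_assoc ({v} : Set A) Y]
          _ = Y + ((Y + {v}) + {v}) := by rw [hswap]
          _ = Y + (Y + {v + v}) := by rw [add_assoc Y ({v} : Set A), Set.singleton_add_singleton]
          _ = (Y + Y) + {v + v} := (add_assoc _ _ _).symm
      have hsub : X + (Y + Y) + {v + v} ⊆ X + Y + {v} := by
        rw [add_assoc X (Y + Y), add_assoc X Y, ← compute, ← h3]
        apply Set.add_subset_add_left
        intro z hz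
        rw [Set.mem_add] at hz
        obtain ⟨a, ha, b, hb, rfl⟩ := hz
        exact AddSubsemigroup.add_mem _ (AddSubsemigroup.subset_closure ha)
          (AddSubsemigroup.subset_closure hb)
      refine ⟨ybar, hybarY, Set.Subset.antisymm ?_ ?_⟩
      · intro z hz
        have h1 : z + (v + v) ∈ X + Y + {v} :=
          hsub (Set.mem_add.mpr ⟨z, hz, v + v, rfl, rfl⟩)
        rw [Set.mem_add] at h1
        obtain ⟨t, ht, w, hw, hzw⟩ := h1
        rw [Set.mem_singleton_iff] at hw
        rw [hw] at hzw
        have htz : t = z + v := add_right_cancel (b := v) (by rw [hzw, ← add_assoc])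
        rw [Set.mem_add]
        refine ⟨t, ht, ybar, rfl, ?_⟩
        rw [htz, add_assoc, hvu, (he z).1]
      · intro z hz
        rw [Set.mem_add] at hz
        obtain ⟨t, ht, w, hw, rfl⟩ := hz
        rw [Set.mem_singleton_iff] at hw
        rw [hw]
        rw [Set.mem_add] at ht
        obtain ⟨x, hx, y, hy, rfl⟩ := ht
        exact Set.mem_add.mpr ⟨x, hx, y + ybar,
          Set.mem_add.mpr ⟨y, hy, ybar, hybarY, rfl⟩, (add_assoc x y ybar).symm⟩

theorem stmt11 {A : Type*} [AddSemigroup A] [IsCancelAdd A] (X Y : Set A)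
    (hX : X.Finite) (hY : Y.Finite)
    (hcomm : CommOn (AddSubsemigroup.closure Y : Set A))
    (hu : ∃ y ∈ Y, IsUnitElem y) :
    ((∃ ybar ∈ Y, IsUnitElem ybar ∧ X + (Y + Y) = X + Y + {ybar}) ↔
      (∀ y ∈ Y, X + (Y + Y) = X + Y + {y})) ∧
    ((∀ y ∈ Y, X + (Y + Y) = X + Y + {y}) ↔
      (∀ ybar ∈ Y, IsUnitElem ybar →
        X + dclosure ((fun y => y + neg ybar) '' Y) =
          X + (AddSubsemigroup.closure ((fun y => y + neg ybar) '' Y) : Set A) ∧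
        X + (AddSubsemigroup.closure ((fun y => y + neg ybar) '' Y) : Set A) =
          X + ((fun y => y + neg ybar) '' Y))) :=
  stmt11' X Y hX hY hcomm hu
end

section
/- Let (A,+) be a cancellative monoid with identity 0, and let X, Y ⊆ A with Y containing a unit and |Y| ≥ 2. Let κ be an integer with κ ≤ γ(Y). Then there exist X₀, Y₀ ⊆ A such that: |X₀ + Y₀| = |X + Y|, |X₀| = |X|, |Y₀| = |Y|, γ(X₀) = γ(X), γ(Y₀) = γ(Y), 0 ∈ Y₀, and ord(y) ≥ κ for every y ∈ Y₀ with y ≠ 0; moreover, if ⟨Y⟩ is commutative then ⟨Y₀⟩ is commutative. -/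
open scoped Pointwise Classical
open AddSubsemigroup

open CD

section Lemmas

variable {A : Type*} [AddMonoid A]

theorem identity_eq_zero {e : A} (he : IsIdentity e) : e = 0 := by
  have h := (he 0).2; simpa using h

theorem isUnitElem_iff' {u : A} : IsUnitElem u ↔ ∃ v : A, u + v = 0 ∧ v + u = 0 := by
  constructor
  · rintro ⟨e, v, he, h1, h2⟩
    rw [identity_eq_zero he] at h1 h2
    exact ⟨v, h1, h2⟩
  · rintro ⟨v, h1, h2⟩
    exact ⟨0, v, fun x => ⟨add_zero x, zero_add x⟩, h1, h2⟩

theorem neg_spec {u : A} (h : IsUnitElem u) : u + neg u = 0 ∧ neg u + u = 0 := by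
  rw [CD.neg, dif_pos h]
  obtain ⟨he, h1, h2⟩ := h.choose_spec.choose_spec
  exact ⟨h1.trans (identity_eq_zero he), h2.trans (identity_eq_zero he)⟩

theorem neg_eq_of {u v : A} (h : IsUnitElem u) (h1 : u + v = 0) (h2 : v + u = 0) :
    neg u = v := by
  have hs := neg_spec h
  calc neg u = neg u + 0 := (add_zero _).symm
    _ = neg u + (u + v) := by rw [h1]
    _ = (neg u + u) + v := (add_assoc _ _ _).symm
    _ = v := by rw [hs.2, zero_add]

theorem isUnitElem_neg {u : A} (h : IsUnitElem u) : IsUnitElem (neg u) :=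
  isUnitElem_iff'.2 ⟨u, (neg_spec h).2, (neg_spec h).1⟩

theorem neg_neg' {u : A} (h : IsUnitElem u) : neg (neg u) = u :=
  neg_eq_of (isUnitElem_neg h) (neg_spec h).2 (neg_spec h).1

theorem unit_aux1 {a b : A} (ha : IsUnitElem a) (hb : IsUnitElem b) :
    a + b + (neg b + neg a) = 0 := by
  calc a + b + (neg b + neg a) = a + ((b + neg b) + neg a) := by simp only [add_assoc]
    _ = 0 := by rw [(neg_spec hb).1, zero_add, (neg_spec ha).1]

theorem unit_aux2 {a b : A} (ha : IsUnitElem a) (hb : IsUnitElem b) :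
    (neg b + neg a) + (a + b) = 0 := by
  calc (neg b + neg a) + (a + b) = neg b + ((neg a + a) + b) := by simp only [add_assoc]
    _ = 0 := by rw [(neg_spec ha).2, zero_add, (neg_spec hb).2]

theorem isUnitElem_add {a b : A} (ha : IsUnitElem a) (hb : IsUnitElem b) :
    IsUnitElem (a + b) :=
  isUnitElem_iff'.2 ⟨neg b + neg a, unit_aux1 ha hb, unit_aux2 ha hb⟩

theorem neg_add_rev' {a b : A} (ha : IsUnitElem a) (hb : IsUnitElem b) :
    neg (a + b) = neg b + neg a :=
  neg_eq_of (isUnitElem_add ha hb) (unit_aux1 ha hb) (unit_aux2 ha hb)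

theorem commOn_closure {A : Type*} [AddSemigroup A] {S : Set A} (h : CommOn S) :
    CommOn (closure S : Set A) := by
  intro a ha b hb
  exact closure_induction₂ (p := fun x y _ _ => x + y = y + x)
    (fun x y hx hy => h x hx y hy)
    (fun x y z _ _ _ h1 h2 => by
      show x + y + z = z + (x + y)
      rw [add_assoc, h2, ← add_assoc, h1, add_assoc])
    (fun x y z _ _ _ h1 h2 => by
      show z + (x + y) = x + y + z
      rw [← add_assoc, h1, add_assoc, h2, ← add_assoc])
    ha hb

section Cancel

variable [IsCancelAdd A]

/-- Conjugation by a unit as an `AddHom`. -/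
noncomputable def conjHom {c : A} (hc : IsUnitElem c) : AddHom A A where
  toFun x := c + x + neg c
  map_add' x y := by
    show c + (x + y) + neg c = (c + x + neg c) + (c + y + neg c)
    have key : neg c + (c + (y + neg c)) = y + neg c := by
      rw [← add_assoc, (neg_spec hc).2, zero_add]
    simp only [add_assoc]
    rw [key]

theorem conjHom_injective {c : A} (hc : IsUnitElem c) :
    Function.Injective (conjHom hc) := by
  intro x y h
  have h' : c + x + neg c = c + y + neg c := h
  exact add_left_cancel (add_right_cancel h')

theorem ord_conj {c : A} (hc : IsUnitElem c) (a : A) : ord (c + a + neg c) = ord a := by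
  have h1 : ({c + a + neg c} : Set A) = (conjHom hc) '' {a} := by
    simp [conjHom]
  have h2 : (closure ({c + a + neg c} : Set A) : Set A)
      = (conjHom hc) '' (closure ({a} : Set A) : Set A) := by
    rw [h1, ← AddHom.map_mclosure]
    rfl
  rw [ord, ord, h2, Set.InjOn.encard_image ((conjHom_injective hc).injOn)]

theorem unitsIn_right {c : A} (hc : IsUnitElem c) (X : Set A) :
    unitsIn ((fun x => x + c) '' X) = (fun x => x + c) '' unitsIn X := by
  ext w
  constructor
  · rintro ⟨⟨x, hx, rfl⟩, hu⟩
    refine ⟨x, ⟨hx, ?_⟩, rfl⟩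
    have hx' : x = (x + c) + neg c := by rw [add_assoc, (neg_spec hc).1, add_zero]
    rw [hx']
    exact isUnitElem_add hu (isUnitElem_neg hc)
  · rintro ⟨x, ⟨hx, hu⟩, rfl⟩
    exact ⟨⟨x, hx, rfl⟩, isUnitElem_add hu hc⟩

theorem unitsIn_left {c : A} (hc : IsUnitElem c) (X : Set A) :
    unitsIn ((fun x => c + x) '' X) = (fun x => c + x) '' unitsIn X := by
  ext w
  constructor
  · rintro ⟨⟨x, hx, rfl⟩, hu⟩
    refine ⟨x, ⟨hx, ?_⟩, rfl⟩
    have hx' : x = neg c + (c + x) := by rw [← add_assoc, (neg_spec hc).2, zero_add]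
    rw [hx']
    exact isUnitElem_add (isUnitElem_neg hc) hu
  · rintro ⟨x, ⟨hx, hu⟩, rfl⟩
    exact ⟨⟨x, hx, rfl⟩, isUnitElem_add hc hu⟩

theorem sep_image {f : A → A} (hf : Function.Injective f) (X : Set A) (x₀ : A) :
    {x ∈ f '' X | x ≠ f x₀} = f '' {x ∈ X | x ≠ x₀} := by
  ext w
  constructor
  · rintro ⟨⟨a, ha, rfl⟩, hne⟩
    exact ⟨a, ⟨ha, fun h => hne (by rw [h])⟩, rfl⟩
  · rintro ⟨a, ⟨ha, hne⟩, rfl⟩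
    exact ⟨⟨a, ha, rfl⟩, fun h => hne (hf h)⟩

theorem gamma_right {c : A} (hc : IsUnitElem c) (X : Set A) :
    gamma (X + {c}) = gamma X := by
  have hinj : Function.Injective (fun x : A => x + c) := fun a b h => add_right_cancel h
  rw [Set.add_singleton]
  have hcard : ((fun x => x + c) '' X).encard = X.encard :=
    Set.InjOn.encard_image hinj.injOn
  unfold gamma
  rw [hcard]
  split_ifs with h
  · rfl
  · rw [unitsIn_right hc, iSup_image]
    refine biSup_congr fun x₀ hx₀ => ?_
    rw [sep_image hinj X x₀, iInf_image]
    refine biInf_congr fun x hx => ?_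
    congr 1
    rw [neg_add_rev' hx₀.2 hc]
    calc (x + c) + (neg c + neg x₀) = x + ((c + neg c) + neg x₀) := by simp only [add_assoc]
      _ = x + neg x₀ := by rw [(neg_spec hc).1, zero_add]

theorem gamma_left {c : A} (hc : IsUnitElem c) (X : Set A) :
    gamma ({c} + X) = gamma X := by
  have hinj : Function.Injective (fun x : A => c + x) := fun a b h => add_left_cancel h
  rw [Set.singleton_add]
  have hcard : ((fun x => c + x) '' X).encard = X.encard :=
    Set.InjOn.encard_image hinj.injOn
  unfold gamma
  rw [hcard]
  split_ifs with h
  · rfl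
  · rw [unitsIn_left hc, iSup_image]
    refine biSup_congr fun x₀ hx₀ => ?_
    rw [sep_image hinj X x₀, iInf_image]
    refine biInf_congr fun x hx => ?_
    have key : (c + x) + neg (c + x₀) = c + (x + neg x₀) + neg c := by
      rw [neg_add_rev' hc hx₀.2]
      simp only [add_assoc]
    rw [key, ord_conj hc]

theorem exists_good_unit (Y : Set A) (hY : 2 ≤ Y.encard) {n : ℕ}
    (hn : (n : ℕ∞) ≤ gamma Y) (hu : ∃ y ∈ Y, IsUnitElem y) :
    ∃ y₀ ∈ Y, IsUnitElem y₀ ∧ ∀ y ∈ Y, y ≠ y₀ → (n : ℕ∞) ≤ ord (y + neg y₀) := by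
  rcases Nat.eq_zero_or_pos n with h0 | hpos
  · obtain ⟨y₀, hy₀, hu₀⟩ := hu
    exact ⟨y₀, hy₀, hu₀, fun y _ _ => by simp [h0]⟩
  · by_contra hcon
    push_neg at hcon
    have hne1 : ¬ Y.encard ≤ 1 := not_le.2 (lt_of_lt_of_le (by norm_num) hY)
    rw [gamma, if_neg hne1] at hn
    have hle : (⨆ x₀ ∈ unitsIn Y, ⨅ x ∈ {x ∈ Y | x ≠ x₀}, ord (x + neg x₀))
        ≤ ((n - 1 : ℕ) : ℕ∞) := by
      refine iSup₂_le fun x₀ hx₀ => ?_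
      obtain ⟨y, hy, hne, hlt⟩ := hcon x₀ hx₀.1 hx₀.2
      have h1 : (⨅ x ∈ {x ∈ Y | x ≠ x₀}, ord (x + neg x₀)) ≤ ord (y + neg x₀) :=
        biInf_le _ ⟨hy, hne⟩
      refine le_trans h1 ?_
      have hsum : ((n - 1 : ℕ) : ℕ∞) + 1 = (n : ℕ∞) := by
        norm_cast
        omega
      have hlt2 : ord (y + neg x₀) < ((n - 1 : ℕ) : ℕ∞) + 1 := by rw [hsum]; exact hlt
      exact (ENat.lt_add_one_iff (ENat.coe_ne_top _)).1 hlt2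
    have hcontra : (n : ℕ∞) ≤ ((n - 1 : ℕ) : ℕ∞) := le_trans hn hle
    have hlt' : ((n - 1 : ℕ) : ℕ∞) < (n : ℕ∞) := Nat.cast_lt.2 (Nat.sub_lt hpos one_pos)
    exact absurd hcontra (not_le.2 hlt')

end Cancel

end Lemmas


theorem stmt17 {A : Type*} [AddMonoid A] [IsCancelAdd A] (X Y : Set A)
    (hu : ∃ y ∈ Y, IsUnitElem y) (hY : 2 ≤ Y.encard)
    (κ : ℤ) (hκ : (κ.toNat : ℕ∞) ≤ gamma Y) :
    ∃ X₀ Y₀ : Set A,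
      (X₀ + Y₀).encard = (X + Y).encard ∧
      X₀.encard = X.encard ∧ Y₀.encard = Y.encard ∧
      gamma X₀ = gamma X ∧ gamma Y₀ = gamma Y ∧
      (0 : A) ∈ Y₀ ∧
      (∀ y ∈ Y₀, y ≠ 0 → (κ.toNat : ℕ∞) ≤ ord y) ∧
      (CommOn (AddSubsemigroup.closure Y : Set A) →
        CommOn (AddSubsemigroup.closure Y₀ : Set A)) := by
  obtain ⟨y₀, hy₀Y, hy₀u, hord⟩ := exists_good_unit Y hY hκ hu
  have hneg := neg_spec hy₀u
  refine ⟨X + {y₀}, {neg y₀} + Y, ?_, ?_, ?_, ?_, ?_, ?_, ?_, ?_⟩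
  · have hXY : (X + {y₀}) + ({neg y₀} + Y) = X + Y := by
      rw [add_assoc, ← add_assoc ({y₀} : Set A), Set.singleton_add_singleton, hneg.1,
        Set.singleton_zero, zero_add]
    rw [hXY]
  · rw [Set.add_singleton]
    exact Set.InjOn.encard_image (fun a _ b _ h => add_right_cancel h)
  · rw [Set.singleton_add]
    exact Set.InjOn.encard_image (fun a _ b _ h => add_left_cancel h)
  · exact gamma_right hy₀u X
  · exact gamma_left (isUnitElem_neg hy₀u) Y
  · rw [Set.singleton_add]
    exact ⟨y₀, hy₀Y, hneg.2⟩
  · intro y hy hy0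
    rw [Set.singleton_add] at hy
    obtain ⟨y', hy', rfl⟩ := hy
    show (κ.toNat : ℕ∞) ≤ ord (neg y₀ + y')
    have hy0' : neg y₀ + y' ≠ 0 := hy0
    have hne : y' ≠ y₀ := by
      rintro rfl
      exact hy0' hneg.2
    have key : neg y₀ + y' = neg y₀ + (y' + neg y₀) + neg (neg y₀) := by
      rw [neg_neg' hy₀u]
      calc neg y₀ + y' = neg y₀ + (y' + 0) := by rw [add_zero]
        _ = neg y₀ + (y' + (neg y₀ + y₀)) := by rw [hneg.2]
        _ = neg y₀ + (y' + neg y₀) + y₀ := by simp only [add_assoc]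
    rw [key, ord_conj (isUnitElem_neg hy₀u)]
    exact hord y' hy' hne
  · intro hcomm
    apply commOn_closure
    have hy : ∀ z ∈ Y, z + neg y₀ = neg y₀ + z := by
      intro z hz
      have h1 : y₀ + z = z + y₀ :=
        hcomm y₀ (subset_closure hy₀Y) z (subset_closure hz)
      calc z + neg y₀ = ((neg y₀ + y₀) + z) + neg y₀ := by rw [hneg.2, zero_add]
        _ = neg y₀ + (y₀ + z) + neg y₀ := by simp only [add_assoc]
        _ = neg y₀ + (z + y₀) + neg y₀ := by rw [h1]
        _ = neg y₀ + z + (y₀ + neg y₀) := by simp only [add_assoc]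
        _ = neg y₀ + z := by rw [hneg.1, add_zero]
    intro a ha b hb
    rw [Set.singleton_add] at ha hb
    obtain ⟨y, hyY, rfl⟩ := ha
    obtain ⟨y', hy'Y, rfl⟩ := hb
    have hyy' : y + y' = y' + y :=
      hcomm y (subset_closure hyY) y' (subset_closure hy'Y)
    set n := neg y₀ with hn
    calc (n + y) + (n + y') = n + (y + n) + y' := by simp only [add_assoc]
      _ = n + (n + y) + y' := by rw [hy y hyY]
      _ = (n + n) + (y + y') := by simp only [add_assoc]
      _ = (n + n) + (y' + y) := by rw [hyy']
      _ = n + (n + y') + y := by simp only [add_assoc]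
      _ = n + (y' + n) + y := by rw [hy y' hy'Y]
      _ = (n + y') + (n + y) := by simp only [add_assoc]
end

section
/- Let (A,+) be a cancellative semigroup and X, Y ⊆ A finite non-empty sets with ⟨Y⟩ commutative, and suppose X + 2Y = X + Y + ȳ for some unit ȳ ∈ Y. Then |X + Y| ≥ ord(y − y₀) for all y ∈ Y and all units y₀ ∈ Y; in particular, |X + Y| ≥ γ(Y). -/
open scoped Pointwise Classical
open AddSubsemigroup

open CD

/-!
Put `S = X + Y`. The hypothesis gives `S + Y = S + ȳ`, so every translate `S + y` with `y ∈ Y`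
lies in `S + ȳ`; by cancellativity both have `|S|` elements, and finiteness forces
`S + y = S + ȳ`. For a unit `y₀ ∈ Y` this makes `w = y − y₀` a stabiliser of `S`, hence so is
every element of the semigroup `⟨w⟩`, and `t ↦ s + t` (for a fixed `s ∈ S`) injects `⟨w⟩` into `S`.
-/

namespace CD

variable {A : Type*} [AddSemigroup A]

theorem IsUnitElem.exists_isIdentity_add_neg {u : A} (h : IsUnitElem u) :
    ∃ e, IsIdentity e ∧ u + neg u = e := by
  unfold neg
  rw [dif_pos h]
  exact ⟨h.choose, h.choose_spec.choose_spec.1, h.choose_spec.choose_spec.2.1⟩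

theorem IsIdentity.add_singleton {e : A} (he : IsIdentity e) (S : Set A) : S + {e} = S := by
  simp [Set.add_singleton, fun x => (he x).1]

theorem encard_add_singleton [IsRightCancelAdd A] (S : Set A) (a : A) :
    (S + {a}).encard = S.encard := by
  rw [Set.add_singleton]
  exact (add_left_injective a).injOn.encard_image

theorem encard_le_encard_add_left [IsLeftCancelAdd A] {X : Set A} (hX : X.Nonempty)
    (Y : Set A) : Y.encard ≤ (X + Y).encard := by
  obtain ⟨x, hx⟩ := hX
  calc Y.encard = ((x + ·) '' Y).encard := ((add_right_injective x).injOn.encard_image).symm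
    _ ≤ (X + Y).encard := Set.encard_le_encard (Set.image_subset_iff.2 fun _ hy ↦
        Set.add_mem_add hx hy)

theorem add_singleton_eq_of_add_eq [IsRightCancelAdd A] {S Y : Set A} {b y : A}
    (hS : S.Finite) (hSY : S + Y = S + {b}) (hy : y ∈ Y) : S + {y} = S + {b} :=
  (hS.add (Set.finite_singleton b)).eq_of_subset_of_encard_le'
    (hSY ▸ Set.add_subset_add_left (Set.singleton_subset_iff.2 hy))
    (by rw [encard_add_singleton, encard_add_singleton])

theorem add_singleton_add_neg_eq_self {S : Set A} {y y₀ : A} (h0 : IsUnitElem y₀)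
    (h : S + {y} = S + {y₀}) : S + {y + neg y₀} = S := by
  obtain ⟨e, he, hy₀e⟩ := h0.exists_isIdentity_add_neg
  rw [← Set.singleton_add_singleton, ← add_assoc, h, add_assoc, Set.singleton_add_singleton,
    hy₀e, he.add_singleton]

theorem add_singleton_eq_self_of_mem_closure {S : Set A} {w t : A} (hw : S + {w} = S)
    (ht : t ∈ closure {w}) : S + {t} = S := by
  induction ht using closure_induction with
  | mem x hx => rwa [Set.mem_singleton_iff.1 hx]
  | add a b _ _ iha ihb => rw [← Set.singleton_add_singleton, ← add_assoc, iha, ihb]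

theorem ord_le_encard_of_add_singleton_eq_self [IsLeftCancelAdd A] {S : Set A} {w : A}
    (hS : S.Nonempty) (hw : S + {w} = S) : ord w ≤ S.encard := by
  obtain ⟨s, hs⟩ := hS
  calc ord w = ((s + ·) '' (closure {w} : Set A)).encard :=
        ((add_right_injective s).injOn.encard_image).symm
    _ ≤ S.encard := Set.encard_le_encard <| Set.image_subset_iff.2 fun t ht ↦ by
        rw [Set.mem_preimage, ← add_singleton_eq_self_of_mem_closure hw ht]
        exact Set.add_mem_add hs rfl

theorem ord_add_neg_le_encard [IsCancelAdd A] {S Y : Set A} {b y y₀ : A} (hS : S.Finite)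
    (hSne : S.Nonempty) (hSY : S + Y = S + {b}) (hy : y ∈ Y) (hy₀ : y₀ ∈ Y)
    (h0 : IsUnitElem y₀) : ord (y + neg y₀) ≤ S.encard :=
  ord_le_encard_of_add_singleton_eq_self hSne <| add_singleton_add_neg_eq_self h0 <|
    (add_singleton_eq_of_add_eq hS hSY hy).trans (add_singleton_eq_of_add_eq hS hSY hy₀).symm

theorem gamma_le {Y : Set A} {n : ℕ∞} (hY : Y.encard ≤ n)
    (hord : ∀ y ∈ Y, ∀ y₀ ∈ Y, IsUnitElem y₀ → ord (y + neg y₀) ≤ n) : gamma Y ≤ n := by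
  unfold gamma
  split_ifs with h1
  · exact hY
  · refine iSup₂_le fun y₀ ⟨hy₀, h0⟩ ↦ ?_
    obtain ⟨y, hy, hne⟩ := Set.exists_ne_of_one_lt_encard (not_le.1 h1) y₀
    exact (iInf₂_le y ⟨hy, hne⟩).trans (hord y hy y₀ hy₀ h0)

end CD

theorem stmt18_general {A : Type*} [AddSemigroup A] [IsCancelAdd A] (X Y : Set A)
    (hXf : X.Finite) (hXne : X.Nonempty) (hYf : Y.Finite)
    (h : ∃ ybar ∈ Y, IsUnitElem ybar ∧ X + (Y + Y) = X + Y + {ybar}) :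
    (∀ y ∈ Y, ∀ y₀ ∈ Y, IsUnitElem y₀ → ord (y + neg y₀) ≤ (X + Y).encard) ∧
    gamma Y ≤ (X + Y).encard := by
  obtain ⟨ybar, hybar, -, hXY⟩ := h
  have hS : X + Y + Y = X + Y + {ybar} := by rw [add_assoc, hXY]
  have hord : ∀ y ∈ Y, ∀ y₀ ∈ Y, IsUnitElem y₀ → ord (y + neg y₀) ≤ (X + Y).encard :=
    fun _ hy _ hy₀ h0 ↦ ord_add_neg_le_encard (hXf.add hYf) (hXne.add ⟨ybar, hybar⟩) hS hy hy₀ h0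
  exact ⟨hord, gamma_le (encard_le_encard_add_left hXne Y) hord⟩

theorem stmt18 {A : Type*} [AddSemigroup A] [IsCancelAdd A] (X Y : Set A)
    (hXf : X.Finite) (hXne : X.Nonempty) (hYf : Y.Finite) (hYne : Y.Nonempty)
    (hcomm : CommOn (AddSubsemigroup.closure Y : Set A))
    (h : ∃ ybar ∈ Y, IsUnitElem ybar ∧ X + (Y + Y) = X + Y + {ybar}) :
    (∀ y ∈ Y, ∀ y₀ ∈ Y, IsUnitElem y₀ → ord (y + neg y₀) ≤ (X + Y).encard) ∧
    gamma Y ≤ (X + Y).encard :=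
  stmt18_general X Y hXf hXne hYf h
end
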